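/- arXiv:2110.09838 — 2 statements merged into one kernel-verified Lean document; each statement's English description precedes it below -/
import Mathlib

section
/- Let g₀ be a continuous function on X⁺. Then L_ψ g₀ = 0 if and only if for every z ∈ X⁺, the sequence of random variables y ↦ Š_n g₀(y·z), n ≥ 0, on (X⁻_z, ν⁻_z) is a martingale with respect to the filtration generated by the coordinates (y_{−1},...,y_{−n}). -/
open MeasureTheory

variable {A : Type*}

/-- The one-sided subshift of finite type. -/
def XplusSet (M : A → A → Bool) : Set (ℕ → A) := {z | ∀ n : ℕ, M (z n) (z (n + 1)) = true}

/-- The one-sided shift map. -/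
def shiftN : (ℕ → A) → ℕ → A := fun z n => z (n + 1)

/-- The inverse of the two-sided shift map. -/
def shiftZinv : (ℤ → A) → ℤ → A := fun x n => x (n - 1)

/-- One-sided Birkhoff sums. -/
noncomputable def birkhoffN (ψ : (ℕ → A) → ℝ) (n : ℕ) (z : ℕ → A) : ℝ :=
  ∑ k ∈ Finset.range n, ψ (shiftN^[k] z)

/-- The projection of a two-sided sequence on its future coordinates. -/
def futurePart (x : ℤ → A) : ℕ → A := fun n => x n

/-- The concatenation `y·z ∈ A^ℤ` of a past `y` (with `y k = x_{-(k+1)}`) and a future `z`. -/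
def concat (y z : ℕ → A) : ℤ → A :=
  fun n => if 0 ≤ n then z n.toNat else y (-(n + 1)).toNat

/-- `y ∈ X⁻_z` : the past `y` is compatible with the future `z`. -/
def pastCompat (M : A → A → Bool) (y z : ℕ → A) : Prop :=
  M (y 0) (z 0) = true ∧ ∀ k : ℕ, M (y (k + 1)) (y k) = true

/-- One-sided Hölder continuity with constant `C` and exponent `α` on `S`. -/
def HolderWithN (S : Set (ℕ → A)) (C α : ℝ) (f : (ℕ → A) → ℝ) : Prop :=
  ∀ z ∈ S, ∀ z' ∈ S, ∀ k : ℕ, (∀ j : ℕ, j < k → z j = z' j) → |f z - f z'| ≤ C * α ^ k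

/-- The one-sided word `a·z` obtained by prepending the word `a = (y_{-k},...,y_{-1})`
(encoded with `a i = x_{-(i+1)}`) to the future `z`. -/
def wordConcat {k : ℕ} (a : Fin k → A) (z : ℕ → A) : ℕ → A :=
  fun n => if h : n < k then a ⟨k - 1 - n, by omega⟩ else z (n - k)

/-- Compatibility of the word `a` with the future `z`. -/
def wordCompat (M : A → A → Bool) {k : ℕ} (a : Fin k → A) (z : ℕ → A) : Prop :=
  (∀ h : 0 < k, M (a ⟨0, h⟩) (z 0) = true) ∧
    ∀ i : ℕ, ∀ h : i + 1 < k, M (a ⟨i + 1, h⟩) (a ⟨i, by omega⟩) = true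

/-- The cylinder `{y : y_{-k} = a_{-k}, ..., y_{-1} = a_{-1}}` in the space of pasts. -/
def pastCyl {k : ℕ} (a : Fin k → A) : Set (ℕ → A) := {y | ∀ i : Fin k, y i = a i}

/-- The family `z ↦ ν⁻_z` of conditional measures on the pasts, determined on cylinders by
`ν⁻_z(C_{a,z}) = exp(-S_k ψ(a·z))` for compatible words `a`, and `0` otherwise. -/
def IsCondGibbs [MeasurableSpace A] (M : A → A → Bool) (ψ : (ℕ → A) → ℝ)
    (νm : (ℕ → A) → Measure (ℕ → A)) : Prop :=
  ∀ z ∈ XplusSet M, ∀ (k : ℕ) (a : Fin k → A),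
    (wordCompat M a z →
      νm z (pastCyl a) = ENNReal.ofReal (Real.exp (-birkhoffN ψ k (wordConcat a z)))) ∧
    (¬ wordCompat M a z → νm z (pastCyl a) = 0)

/-- `a ↦ a·z` : prepending a letter to a one-sided sequence. -/
def consN (a : A) (z : ℕ → A) : ℕ → A := fun n => if n = 0 then a else z (n - 1)

/-- The Ruelle transfer operator `L_ψ φ(z) = ∑_{Ty=z} e^{-ψ(y)} φ(y)`. -/
noncomputable def transfer [Fintype A] [DecidableEq A] (M : A → A → Bool)
    (ψ φ : (ℕ → A) → ℝ) (z : ℕ → A) : ℝ :=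
  ∑ a ∈ Finset.univ.filter (fun a => M a (z 0) = true),
    Real.exp (-ψ (consN a z)) * φ (consN a z)

/-- The reversed Birkhoff sums `Š_n g(x) = ∑_{k=1}^n g(T^{-k} x)` of a function `g`
depending only on the future coordinates. -/
noncomputable def revSumP (g : (ℕ → A) → ℝ) (n : ℕ) (x : ℤ → A) : ℝ :=
  ∑ k ∈ Finset.range n, g (futurePart (shiftZinv^[k + 1] x))

/-- The filtration `𝓕_n` on the space of pasts generated by the coordinates
`y_{-1}, ..., y_{-n}` (i.e. `y 0, ..., y (n-1)`); `𝓕_0` is the trivial σ-algebra. -/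
def pastFiltration (A : Type*) [MeasurableSpace A] :
    MeasureTheory.Filtration ℕ (inferInstance : MeasurableSpace (ℕ → A)) where
  seq n := MeasurableSpace.comap (fun (y : ℕ → A) (i : Fin n) => y i) inferInstance
  mono' := by
    intro n m hnm
    dsimp only
    have heq : (fun (y : ℕ → A) (i : Fin n) => y i) =
        (fun (v : Fin m → A) (i : Fin n) => v (Fin.castLE hnm i)) ∘
          (fun (y : ℕ → A) (i : Fin m) => y i) := rfl
    rw [heq, ← MeasurableSpace.comap_comp]
    exact MeasurableSpace.comap_mono
      ((measurable_pi_lambda _ fun i => measurable_pi_apply _).comap_le)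
  le' n := (measurable_pi_lambda _ fun i => measurable_pi_apply _).comap_le

/-! On the cylinder `[a] = {y : y_{-n} ⋯ y_{-1} = a}` the increment `Š_{n+1} g₀ - Š_n g₀` of the
reversed sums at `y·z` is `g₀(y_{-(n+1)}·a·z)`, which depends only on the next letter `y_{-(n+1)}`.
Since the masses of the subcylinders `[y_{-(n+1)}·a]` are `exp(-ψ(y_{-(n+1)}·a·z))` times the mass
`exp(-S_n ψ(a·z))` of `[a]`, the integral of the increment over `[a]` is
`exp(-S_n ψ(a·z)) · L_ψ g₀(a·z)`. Every `𝓕_n`-set is a finite union of such cylinders, so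
`L_ψ g₀ = 0` on `X⁺` makes the increments orthogonal to `𝓕_n`. Conversely, for `n = 0` the
martingale property reads `L_ψ g₀(z) = ∫ Š_1 g₀ dν⁻_z = ∫ Š_0 g₀ dν⁻_z = 0`.
-/

theorem setIntegral_preimage_finset_eq_sum {Ω β : Type*} [MeasurableSpace Ω] [MeasurableSpace β]
    [MeasurableSingletonClass β] {μ : Measure Ω} {φ : Ω → β} (hφ : Measurable φ) {f : Ω → ℝ}
    (hf : Integrable f μ) (t : Finset β) :
    ∫ x in φ ⁻¹' t, f x ∂μ = ∑ b ∈ t, ∫ x in φ ⁻¹' {b}, f x ∂μ := by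
  have hunion : φ ⁻¹' t = ⋃ b ∈ t, φ ⁻¹' {b} := by ext; simp
  rw [hunion, integral_biUnion_finset t (fun b _ => hφ (measurableSet_singleton b))
    (fun b _ b' _ hbb' => (Set.disjoint_singleton.2 hbb').preimage φ) (fun b _ => hf.integrableOn)]

section Words

theorem wordConcat_zero (a : Fin 0 → A) (z : ℕ → A) : wordConcat a z = z := by
  funext m
  simp [wordConcat]

theorem wordConcat_snoc {n : ℕ} (a : Fin n → A) (b : A) (z : ℕ → A) :
    wordConcat (Fin.snoc a b : Fin (n + 1) → A) z = consN b (wordConcat a z) := by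
  funext m
  rcases m with _ | m
  · simp [wordConcat, consN, Fin.snoc]
  · by_cases hm : m < n
    · simp [wordConcat, consN, Fin.snoc, hm, show n - (m + 1) < n by omega]
      congr 2
      omega
    · simp [wordConcat, consN, hm, show ¬ m + 1 < n + 1 by omega]

theorem wordCompat_iff {k : ℕ} (M : A → A → Bool) (a : Fin k → A) (z : ℕ → A) :
    wordCompat M a z ↔ ∀ m < k, M (wordConcat a z m) (wordConcat a z (m + 1)) = true := by
  have hword : ∀ m (hm : m < k), wordConcat a z m = a (Fin.rev ⟨m, hm⟩) := by
    intro m hm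
    simp only [wordConcat, dif_pos hm]
    congr 1
    ext
    simp
    omega
  have hend : wordConcat a z k = z 0 := by simp [wordConcat]
  constructor
  · rintro ⟨hfirst, hstep⟩ m hm
    rw [hword m hm]
    by_cases hlast : m + 1 < k
    · rw [hword _ hlast]
      convert hstep (k - 2 - m) (by omega) using 3 <;> ext <;> simp <;> omega
    · obtain rfl : m + 1 = k := by omega
      rw [hend]
      convert hfirst (by omega) using 3
      ext; simp
  · intro h
    refine ⟨fun hk => ?_, fun i hi => ?_⟩
    · convert h (k - 1) (by omega) using 2
      · rw [hword _ (by omega)]; congr 1; ext; simp; omega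
      · rw [show k - 1 + 1 = k by omega, hend]
    · convert h (k - 2 - i) (by omega) using 2
      · rw [hword _ (by omega)]; congr 1; ext; simp; omega
      · rw [hword _ (by omega)]; congr 1; ext; simp; omega

theorem wordCompat_zero (M : A → A → Bool) (a : Fin 0 → A) (z : ℕ → A) : wordCompat M a z := by
  simp [wordCompat_iff]

theorem wordCompat_snoc_iff (M : A → A → Bool) {n : ℕ} (a : Fin n → A) (b : A) (z : ℕ → A) :
    wordCompat M (Fin.snoc a b : Fin (n + 1) → A) z ↔
      wordCompat M a z ∧ M b (wordConcat a z 0) = true := by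
  simp only [wordCompat_iff, wordConcat_snoc, Nat.forall_lt_succ_left, consN]
  simp [and_comm]

theorem wordConcat_mem_XplusSet (M : A → A → Bool) {k : ℕ} {a : Fin k → A} {z : ℕ → A}
    (hz : z ∈ XplusSet M) (ha : wordCompat M a z) : wordConcat a z ∈ XplusSet M := by
  intro m
  by_cases hm : m < k
  · exact (wordCompat_iff M a z).1 ha m hm
  · simpa [wordConcat, hm, show ¬ m + 1 < k by omega, show m + 1 - k = m - k + 1 by omega]
      using hz (m - k)

theorem birkhoffN_consN_succ (ψ : (ℕ → A) → ℝ) (n : ℕ) (b : A) (w : ℕ → A) :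
    birkhoffN ψ (n + 1) (consN b w) = ψ (consN b w) + birkhoffN ψ n w := by
  have hshift : shiftN (consN b w) = w := by
    funext m
    simp [shiftN, consN]
  simp only [birkhoffN, Finset.sum_range_succ', Function.iterate_succ_apply, hshift,
    Function.iterate_zero_apply]
  ring

end Words

section Past

/-- `pastProj n y = (y_{-1}, ..., y_{-n})`; `pastFiltration A n` is the σ-algebra it generates. -/
def pastProj (n : ℕ) (y : ℕ → A) : Fin n → A := fun i => y i

theorem pastCyl_eq_preimage {n : ℕ} (a : Fin n → A) : pastCyl a = pastProj n ⁻¹' {a} := by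
  ext y
  simp [pastCyl, pastProj, funext_iff]

theorem pastProj_eq_of_mem_pastCyl {n : ℕ} {a : Fin n → A} {y : ℕ → A} (hy : y ∈ pastCyl a) :
    pastProj n y = a := by
  rwa [pastCyl_eq_preimage] at hy

theorem pastCyl_inter_preimage_eval {n : ℕ} (a : Fin n → A) (b : A) :
    pastCyl a ∩ (fun y => y n) ⁻¹' {b} = pastCyl (Fin.snoc a b : Fin (n + 1) → A) := by
  ext y
  simp only [pastCyl, Set.mem_inter_iff, Set.mem_ofPred_eq, Set.mem_preimage,
    Set.mem_singleton_iff, Fin.forall_fin_succ', Fin.snoc_castSucc, Fin.snoc_last,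
    Fin.val_castSucc, Fin.val_last]

theorem pastCyl_zero (a : Fin 0 → A) : pastCyl a = Set.univ :=
  Set.eq_univ_of_forall fun _ i => i.elim0

variable [MeasurableSpace A]

theorem measurable_pastProj (n : ℕ) : Measurable (pastProj (A := A) n) :=
  measurable_pi_lambda _ fun _ => measurable_pi_apply _

theorem measurableSet_pastCyl [MeasurableSingletonClass A] {n : ℕ} (a : Fin n → A) :
    MeasurableSet (pastCyl a) := by
  rw [pastCyl_eq_preimage]
  exact measurable_pastProj n (measurableSet_singleton a)

variable [Finite A] [MeasurableSingletonClass A]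

theorem stronglyMeasurable_comp_pastProj {n : ℕ} (F : (Fin n → A) → ℝ) :
    StronglyMeasurable[pastFiltration A n] (fun y => F (pastProj n y)) :=
  (Measurable.of_discrete.comp (comap_measurable (pastProj n))).stronglyMeasurable

theorem integrable_comp_pastProj {μ : Measure (ℕ → A)} [IsFiniteMeasure μ] {n : ℕ}
    (F : (Fin n → A) → ℝ) : Integrable (fun y => F (pastProj n y)) μ :=
  (integrable_map_measure Measurable.of_discrete.aestronglyMeasurable
    (measurable_pastProj n).aemeasurable).1 Integrable.of_finite

end Past

section Gibbs

variable [MeasurableSpace A] {M : A → A → Bool} {ψ : (ℕ → A) → ℝ}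
  {νm : (ℕ → A) → Measure (ℕ → A)} {z : ℕ → A}

theorem IsCondGibbs.isProbabilityMeasure (hνm : IsCondGibbs M ψ νm) (hz : z ∈ XplusSet M) :
    IsProbabilityMeasure (νm z) := by
  have h := (hνm z hz 0 finZeroElim).1 (wordCompat_zero M _ z)
  rw [pastCyl_zero] at h
  exact ⟨by simp [h, birkhoffN]⟩

theorem IsCondGibbs.measureReal_pastCyl_snoc (hνm : IsCondGibbs M ψ νm) (hz : z ∈ XplusSet M)
    {n : ℕ} {a : Fin n → A} (ha : wordCompat M a z) (b : A) :
    (νm z).real (pastCyl (Fin.snoc a b : Fin (n + 1) → A)) =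
      if M b (wordConcat a z 0) = true then
        Real.exp (-birkhoffN ψ n (wordConcat a z)) * Real.exp (-ψ (consN b (wordConcat a z)))
      else 0 := by
  split_ifs with hb
  · rw [measureReal_def, (hνm z hz (n + 1) _).1 ((wordCompat_snoc_iff M a b z).2 ⟨ha, hb⟩),
      ENNReal.toReal_ofReal (Real.exp_nonneg _), wordConcat_snoc, birkhoffN_consN_succ,
      neg_add, Real.exp_add, mul_comm]
  · rw [measureReal_def, (hνm z hz (n + 1) _).2 fun hc => hb ((wordCompat_snoc_iff M a b z).1 hc).2,
      ENNReal.toReal_zero]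

variable [Fintype A] [DecidableEq A] [MeasurableSingletonClass A]

theorem IsCondGibbs.setIntegral_pastCyl (hνm : IsCondGibbs M ψ νm) (hz : z ∈ XplusSet M)
    (g : (ℕ → A) → ℝ) {n : ℕ} {a : Fin n → A} (ha : wordCompat M a z) :
    ∫ y in pastCyl a, g (wordConcat (pastProj (n + 1) y) z) ∂(νm z) =
      Real.exp (-birkhoffN ψ n (wordConcat a z)) * transfer M ψ g (wordConcat a z) := by
  have := hνm.isProbabilityMeasure hz
  have hcyl : ∀ b, ∫ y in pastCyl (Fin.snoc a b : Fin (n + 1) → A),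
      g (wordConcat (pastProj (n + 1) y) z) ∂(νm z) =
        (νm z).real (pastCyl (Fin.snoc a b : Fin (n + 1) → A)) * g (consN b (wordConcat a z)) := by
    intro b
    rw [setIntegral_congr_fun (measurableSet_pastCyl _) (g := fun _ => g (consN b (wordConcat a z)))
      fun y hy => by simp only [pastProj_eq_of_mem_pastCyl hy, wordConcat_snoc],
      setIntegral_const, smul_eq_mul]
  calc ∫ y in pastCyl a, g (wordConcat (pastProj (n + 1) y) z) ∂(νm z)
      = ∑ b, ∫ y in (fun y => y n) ⁻¹' {b}, g (wordConcat (pastProj (n + 1) y) z)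
          ∂(νm z).restrict (pastCyl a) := by
        rw [← setIntegral_preimage_finset_eq_sum (measurable_pi_apply n)
          (integrable_comp_pastProj (fun w => g (wordConcat w z))) Finset.univ]
        simp
    _ = ∑ b, (νm z).real (pastCyl (Fin.snoc a b : Fin (n + 1) → A)) *
          g (consN b (wordConcat a z)) := by
        refine Finset.sum_congr rfl fun b _ => ?_
        rw [Measure.restrict_restrict (measurable_pi_apply n (measurableSet_singleton b)),
          Set.inter_comm, pastCyl_inter_preimage_eval, hcyl]
    _ = Real.exp (-birkhoffN ψ n (wordConcat a z)) * transfer M ψ g (wordConcat a z) := by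
        simp only [transfer, Finset.mul_sum, Finset.sum_filter, hνm.measureReal_pastCyl_snoc hz ha]
        refine Finset.sum_congr rfl fun b _ => ?_
        split_ifs <;> ring

end Gibbs

section ReversedSums

theorem futurePart_shiftZinv_iterate_concat (k : ℕ) (y z : ℕ → A) :
    futurePart (shiftZinv^[k] (concat y z)) = wordConcat (pastProj k y) z := by
  have hiter : ∀ (j : ℕ) (x : ℤ → A) (n : ℤ), shiftZinv^[j] x n = x (n - j) := by
    intro j
    induction j with
    | zero => simp
    | succ j ih =>
      intro x n
      rw [Function.iterate_succ_apply, ih]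
      simp only [shiftZinv]
      congr 1
      push_cast
      ring
  funext m
  simp only [futurePart, hiter, concat, wordConcat, pastProj]
  by_cases hm : m < k
  · rw [if_neg (by omega), dif_pos hm]
    congr 1
    omega
  · rw [if_pos (by omega), dif_neg hm]
    congr 1
    omega

theorem revSumP_concat (g : (ℕ → A) → ℝ) (n : ℕ) (y z : ℕ → A) :
    revSumP g n (concat y z) = ∑ k ∈ Finset.range n, g (wordConcat (pastProj (k + 1) y) z) := by
  simp only [revSumP, futurePart_shiftZinv_iterate_concat]

theorem revSumP_concat_succ (g : (ℕ → A) → ℝ) (n : ℕ) (y z : ℕ → A) :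
    revSumP g (n + 1) (concat y z) =
      revSumP g n (concat y z) + g (wordConcat (pastProj (n + 1) y) z) := by
  simp only [revSumP_concat, Finset.sum_range_succ]

variable [MeasurableSpace A] [Finite A] [MeasurableSingletonClass A]

theorem stronglyAdapted_revSumP_concat (g : (ℕ → A) → ℝ) (z : ℕ → A) :
    StronglyAdapted (pastFiltration A) fun n y => revSumP g n (concat y z) := by
  intro n
  simp only [revSumP_concat]
  exact Finset.stronglyMeasurable_fun_sum _ fun k hk =>
    (stronglyMeasurable_comp_pastProj (fun w => g (wordConcat w z))).mono
      ((pastFiltration A).mono (Finset.mem_range.1 hk))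

theorem integrable_revSumP_concat {μ : Measure (ℕ → A)} [IsFiniteMeasure μ]
    (g : (ℕ → A) → ℝ) (n : ℕ) (z : ℕ → A) :
    Integrable (fun y => revSumP g n (concat y z)) μ := by
  simp only [revSumP_concat]
  exact integrable_finsetSum _ fun k _ => integrable_comp_pastProj (fun w => g (wordConcat w z))

end ReversedSums

section Martingale

variable [Fintype A] [DecidableEq A] [MeasurableSpace A] [MeasurableSingletonClass A]
  {M : A → A → Bool} {ψ : (ℕ → A) → ℝ} {νm : (ℕ → A) → Measure (ℕ → A)} {z : ℕ → A}

theorem IsCondGibbs.setIntegral_increment_eq_zero (hνm : IsCondGibbs M ψ νm)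
    (hz : z ∈ XplusSet M) {g : (ℕ → A) → ℝ} (hg : ∀ w ∈ XplusSet M, transfer M ψ g w = 0)
    {n : ℕ} {s : Set (ℕ → A)} (hs : MeasurableSet[pastFiltration A n] s) :
    ∫ y in s, g (wordConcat (pastProj (n + 1) y) z) ∂(νm z) = 0 := by
  have := hνm.isProbabilityMeasure hz
  obtain ⟨t, -, rfl⟩ := hs
  change ∫ y in pastProj n ⁻¹' t, _ ∂_ = 0
  rw [← t.toFinite.coe_toFinset, setIntegral_preimage_finset_eq_sum (measurable_pastProj n)
    (integrable_comp_pastProj (fun w => g (wordConcat w z)))]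
  refine Finset.sum_eq_zero fun a _ => ?_
  rw [← pastCyl_eq_preimage]
  by_cases ha : wordCompat M a z
  · rw [hνm.setIntegral_pastCyl hz g ha, hg _ (wordConcat_mem_XplusSet M hz ha), mul_zero]
  · rw [Measure.restrict_eq_zero.2 ((hνm z hz n a).2 ha), integral_zero_measure]

theorem IsCondGibbs.martingale_revSumP_concat (hνm : IsCondGibbs M ψ νm) (hz : z ∈ XplusSet M)
    {g : (ℕ → A) → ℝ} (hg : ∀ w ∈ XplusSet M, transfer M ψ g w = 0) :
    Martingale (fun n y => revSumP g n (concat y z)) (pastFiltration A) (νm z) := by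
  have := hνm.isProbabilityMeasure hz
  refine martingale_of_setIntegral_eq_succ (stronglyAdapted_revSumP_concat g z)
    (fun n => integrable_revSumP_concat g n z) fun n s hs => ?_
  simp only [revSumP_concat_succ]
  rw [integral_add (integrable_revSumP_concat g n z).integrableOn
    (integrable_comp_pastProj (fun w => g (wordConcat w z))).integrableOn,
    hνm.setIntegral_increment_eq_zero hz hg hs, add_zero]

theorem IsCondGibbs.transfer_eq_integral (hνm : IsCondGibbs M ψ νm) (hz : z ∈ XplusSet M)
    (g : (ℕ → A) → ℝ) :
    transfer M ψ g z = ∫ y, revSumP g 1 (concat y z) ∂(νm z) := by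
  have h := hνm.setIntegral_pastCyl hz g (wordCompat_zero M finZeroElim z)
  simp only [pastCyl_zero, wordConcat_zero, Measure.restrict_univ, birkhoffN,
    Finset.range_zero, Finset.sum_empty, neg_zero, Real.exp_zero, one_mul] at h
  simp only [revSumP_concat, Finset.sum_range_one, h]

end Martingale

theorem statement7_general [Fintype A] [DecidableEq A] [MeasurableSpace A] [MeasurableSingletonClass A]
    (M : A → A → Bool) (ψ : (ℕ → A) → ℝ)
    (νm : (ℕ → A) → Measure (ℕ → A)) (hνm : IsCondGibbs M ψ νm)
    (g₀ : (ℕ → A) → ℝ) :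
    (∀ z ∈ XplusSet M, transfer M ψ g₀ z = 0) ↔
      ∀ z ∈ XplusSet M,
        MeasureTheory.Martingale (fun (n : ℕ) (y : ℕ → A) => revSumP g₀ n (concat y z))
          (pastFiltration A) (νm z) := by
  refine ⟨fun hg z hz => hνm.martingale_revSumP_concat hz hg, fun hmart z hz => ?_⟩
  have := hνm.isProbabilityMeasure hz
  have h01 := (hmart z hz).setIntegral_eq zero_le_one (MeasurableSet.univ (m := pastFiltration A 0))
  rw [Measure.restrict_univ] at h01
  rw [hνm.transfer_eq_integral hz, ← h01]
  simp [revSumP]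

/-- Martingale characterization of `L_ψ g₀ = 0`: for a continuous `g₀` on `X⁺`,
`L_ψ g₀ = 0` iff for every `z ∈ X⁺` the reversed Birkhoff sums `y ↦ Š_n g₀(y·z)` form a
martingale on `(X⁻_z, ν⁻_z)` with respect to the past coordinate filtration. -/
theorem statement7 [Fintype A] [DecidableEq A] [MeasurableSpace A] [MeasurableSingletonClass A]
    [TopologicalSpace A] [DiscreteTopology A]
    (M : A → A → Bool) (ψ : (ℕ → A) → ℝ) (hψcont : Continuous ψ)
    (hnorm : ∀ z ∈ XplusSet M, transfer M ψ (fun _ => (1 : ℝ)) z = 1)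
    (νm : (ℕ → A) → Measure (ℕ → A)) (hνm : IsCondGibbs M ψ νm)
    (g₀ : (ℕ → A) → ℝ) (hg₀cont : Continuous g₀) :
    (∀ z ∈ XplusSet M, transfer M ψ g₀ z = 0) ↔
      ∀ z ∈ XplusSet M,
        MeasureTheory.Martingale (fun (n : ℕ) (y : ℕ → A) => revSumP g₀ n (concat y z))
          (pastFiltration A) (νm z) :=
  statement7_general M ψ νm hνm g₀
end

section
/- Let g be Hölder continuous on X with ν(g) = 0, not a coboundary, and suppose a function V̌^g(z,·) has been defined for each z ∈ X⁺ as the weak limit of t ↦ ∫_{X⁻_z}(t+Š_n g(y·z)) 1{τ̌_t^g(y·z)>n} ν⁻_z(dy). Then for every z ∈ X⁺ and t ∈ ℝ, V̌^{g∘T^{-1}}(z,t) = L_ψ( V̌^g(·,t) )(z) = Σ_{Tz'=z} e^{−ψ(z')} V̌^g(z',t). -/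
/-!
Conditioning on the letter `y_{-1}` disintegrates `ν⁻_z` as
`∑_{a z ∈ X⁺} e^{-ψ(a z)} (y ↦ a y)_* ν⁻_{a z}`: both sides agree on cylinders by the Gibbs
formula and the cocycle property of Birkhoff sums. Since `T⁻¹((a y)·z) = y·(a z)` and
`Š_n(g ∘ T⁻¹) = Š_n g ∘ T⁻¹`, the `n`-th approximant of `V̌^{g∘T⁻¹}(z, ·)` is `L_ψ` applied to the
`n`-th approximants of `V̌^g`, and passing to the weak limit gives the identity almost everywhere
in `t`; right-continuity makes it hold for every `t`. For the integrals to make sense `g` is first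
replaced by a bounded measurable function agreeing with it on `X`: `ν⁻_z`-almost every past is
admissible, so this changes no approximant.
-/

open MeasureTheory

variable {A : Type*}

/-- The two-sided shift map. -/
def shiftZ : (ℤ → A) → ℤ → A := fun x n => x (n + 1)

/-- The two-sided subshift of finite type. -/
def XSet (M : A → A → Bool) : Set (ℤ → A) := {x | ∀ n : ℤ, M (x n) (x (n + 1)) = true}

/-- The reversed Birkhoff sums `Š_n g(x) = ∑_{k=1}^n g(T^{-k} x)`. -/
noncomputable def revSumZ (g : (ℤ → A) → ℝ) (n : ℕ) (x : ℤ → A) : ℝ :=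
  ∑ k ∈ Finset.range n, g (shiftZinv^[k + 1] x)

/-- Survival event: `τ̌_t^g(x) > n`. -/
def survZ (g : (ℤ → A) → ℝ) (t : ℝ) (n : ℕ) (x : ℤ → A) : Prop :=
  ∀ k : ℕ, 1 ≤ k → k ≤ n → 0 ≤ t + revSumZ g k x

/-- Two-sided Hölder continuity. -/
def HolderWithZ (S : Set (ℤ → A)) (C α : ℝ) (f : (ℤ → A) → ℝ) : Prop :=
  ∀ x ∈ S, ∀ y ∈ S, ∀ k : ℕ, (∀ j : ℤ, |j| < (k : ℤ) → x j = y j) → |f x - f y| ≤ C * α ^ k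

def IsHolderZ (S : Set (ℤ → A)) (f : (ℤ → A) → ℝ) : Prop :=
  ∃ C α : ℝ, 0 < C ∧ 0 < α ∧ α < 1 ∧ HolderWithZ S C α f

def IsCoboundaryZ (S : Set (ℤ → A)) (f : (ℤ → A) → ℝ) : Prop :=
  ∃ g, IsHolderZ S g ∧ ∀ x ∈ S, f x = g (shiftZ x) - g x

/-- `W` is the harmonic function `V̌^g` of the observable `g`: for each `z ∈ X⁺`,
`W(z,·)` is the weak limit of `t ↦ ∫ (t + Š_n g(y·z)) 1{τ̌_t^g(y·z) > n} ν⁻_z(dy)`. -/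
def IsHarmonicLimit [MeasurableSpace A] (M : A → A → Bool)
    (νm : (ℕ → A) → Measure (ℕ → A)) (g : (ℤ → A) → ℝ) (W : (ℕ → A) → ℝ → ℝ) : Prop :=
  ∀ z ∈ XplusSet M,
    (Monotone (W z) ∧ ∀ t : ℝ, ContinuousWithinAt (W z) (Set.Ici t) t) ∧
    ∀ φ : ℝ → ℝ, Continuous φ → HasCompactSupport φ →
      Filter.Tendsto
        (fun n => ∫ t : ℝ, φ t *
          ∫ y, Set.indicator {y' | survZ g t n (concat y' z)}
            (fun y' => t + revSumZ g n (concat y' z)) y ∂νm z)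
        Filter.atTop (nhds (∫ t : ℝ, φ t * W z t))

open Filter Topology

section Sequences

lemma consN_mem_XplusSet {M : A → A → Bool} {a : A} {z : ℕ → A} (ha : M a (z 0) = true)
    (hz : z ∈ XplusSet M) : consN a z ∈ XplusSet M := by
  rintro (_ | n)
  · exact ha
  · exact hz n

lemma mapsTo_shiftZinv_XSet (M : A → A → Bool) : Set.MapsTo shiftZinv (XSet M) (XSet M) :=
  fun _ hx n => by simpa [shiftZinv] using hx (n - 1)

lemma concat_mem_XSet {M : A → A → Bool} {y z : ℕ → A} (hy : pastCompat M y z)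
    (hz : z ∈ XplusSet M) : concat y z ∈ XSet M := by
  intro n
  rcases lt_trichotomy n (-1) with h | rfl | h
  · have hn : (-(n + 1)).toNat = (-(n + 1 + 1)).toNat + 1 := by omega
    simp only [concat, if_neg (show ¬ 0 ≤ n by omega), if_neg (show ¬ 0 ≤ n + 1 by omega), hn]
    exact hy.2 _
  · simpa [concat] using hy.1
  · have hn : (n + 1).toNat = n.toNat + 1 := by omega
    simpa [concat, show 0 ≤ n by omega, show 0 ≤ n + 1 by omega, hn] using hz n.toNat

lemma shiftZinv_concat_consN (a : A) (y z : ℕ → A) :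
    shiftZinv (concat (consN a y) z) = concat y (consN a z) := by
  funext n
  simp only [shiftZinv, concat, consN]
  by_cases h : 0 ≤ n
  · by_cases h0 : n = 0
    · simp [h0]
    · rw [if_pos (by omega), if_pos h, if_neg (by omega)]
      congr 1
      omega
  · rw [if_neg (by omega), if_neg h, if_neg (by omega)]
    congr 1
    omega

lemma shiftN_iterate_apply (k : ℕ) (w : ℕ → A) (n : ℕ) : shiftN^[k] w n = w (n + k) := by
  induction k generalizing w with
  | zero => rfl
  | succ k ih => rw [Function.iterate_succ_apply, ih]; rfl

lemma wordConcat_tail {k : ℕ} (b : Fin (k + 1) → A) (z : ℕ → A) :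
    wordConcat (Fin.tail b) (consN (b 0) z) = wordConcat b z := by
  funext n
  simp only [wordConcat, Fin.tail, consN]
  rcases lt_trichotomy n k with h | rfl | h
  · rw [dif_pos h, dif_pos (by omega)]
    congr 1
    ext
    simp only [Fin.val_succ]
    omega
  · simp
  · rw [dif_neg (by omega), dif_neg (by omega), if_neg (by omega)]
    congr 1

lemma shiftN_iterate_wordConcat {k : ℕ} (b : Fin (k + 1) → A) (z : ℕ → A) :
    shiftN^[k] (wordConcat b z) = consN (b 0) z := by
  funext n
  rw [shiftN_iterate_apply]
  simp only [wordConcat, consN]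
  rcases n with _ | n
  · simp
  · rw [dif_neg (by omega), if_neg (by omega)]
    congr 1
    omega

lemma birkhoffN_wordConcat_succ (ψ : (ℕ → A) → ℝ) {k : ℕ} (b : Fin (k + 1) → A)
    (z : ℕ → A) :
    birkhoffN ψ (k + 1) (wordConcat b z) =
      birkhoffN ψ k (wordConcat (Fin.tail b) (consN (b 0) z)) + ψ (consN (b 0) z) := by
  rw [birkhoffN, Finset.sum_range_succ, shiftN_iterate_wordConcat, wordConcat_tail, birkhoffN]

lemma wordCompat_succ_iff {M : A → A → Bool} {k : ℕ} (b : Fin (k + 1) → A) (z : ℕ → A) :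
    wordCompat M b z ↔ M (b 0) (z 0) = true ∧ wordCompat M (Fin.tail b) (consN (b 0) z) := by
  simp only [wordCompat, Fin.tail, consN]
  constructor
  · rintro ⟨h0, hs⟩
    refine ⟨h0 k.succ_pos, fun _ => by simpa [Fin.succ] using hs 0 (by omega),
      fun i hi => by simpa [Fin.succ] using hs (i + 1) (by omega)⟩
  · rintro ⟨h0, h1, hs⟩
    refine ⟨fun _ => h0, ?_⟩
    rintro (_ | i) hi
    · simpa [Fin.succ] using h1 (by omega)
    · simpa [Fin.succ] using hs i (by omega)

lemma consN_preimage_pastCyl {k : ℕ} (b : Fin (k + 1) → A) :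
    consN (b 0) ⁻¹' pastCyl b = pastCyl (Fin.tail b) := by
  ext y
  simp [pastCyl, Fin.forall_fin_succ, consN, Fin.tail]

lemma consN_preimage_pastCyl_of_ne {k : ℕ} {a : A} {b : Fin (k + 1) → A} (h : a ≠ b 0) :
    consN a ⁻¹' pastCyl b = ∅ := by
  ext y
  simp [pastCyl, Fin.forall_fin_succ, consN, h]

lemma pastCompat_of_forall_wordCompat {M : A → A → Bool} {y z : ℕ → A}
    (h : ∀ k, wordCompat M (fun i : Fin k => y i) z) : pastCompat M y z :=
  ⟨(h 1).1 one_pos, fun k => (h (k + 2)).2 k (by omega)⟩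

end Sequences

section KilledSums

/-- `(t + Š_n g(x)) 1{τ̌_t^g(x) > n}`. -/
noncomputable def killedRevSum (g : (ℤ → A) → ℝ) (t : ℝ) (n : ℕ) : (ℤ → A) → ℝ :=
  {x | survZ g t n x}.indicator fun x => t + revSumZ g n x

lemma revSumZ_comp_shiftZinv (g : (ℤ → A) → ℝ) (n : ℕ) (x : ℤ → A) :
    revSumZ (fun x => g (shiftZinv x)) n x = revSumZ g n (shiftZinv x) :=
  Finset.sum_congr rfl fun k _ => by
    dsimp only
    rw [← Function.iterate_succ_apply' shiftZinv, Function.iterate_succ_apply]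

lemma killedRevSum_comp_shiftZinv (g : (ℤ → A) → ℝ) (t : ℝ) (n : ℕ) (x : ℤ → A) :
    killedRevSum (fun x => g (shiftZinv x)) t n x = killedRevSum g t n (shiftZinv x) := by
  simp only [killedRevSum, Set.indicator_apply, Set.mem_ofPred_eq, survZ, revSumZ_comp_shiftZinv]

lemma killedRevSum_congr {M : A → A → Bool} {g G : (ℤ → A) → ℝ} (hGg : Set.EqOn G g (XSet M))
    {x : ℤ → A} (hx : x ∈ XSet M) (t : ℝ) (n : ℕ) :
    killedRevSum G t n x = killedRevSum g t n x := by
  have hsum : ∀ k, revSumZ G k x = revSumZ g k x := fun k =>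
    Finset.sum_congr rfl fun j _ => hGg ((mapsTo_shiftZinv_XSet M).iterate (j + 1) hx)
  simp only [killedRevSum, Set.indicator_apply, Set.mem_ofPred_eq, survZ, hsum]

lemma killedRevSum_mono (g : (ℤ → A) → ℝ) (n : ℕ) (x : ℤ → A) :
    Monotone fun t => killedRevSum g t n x := by
  intro t t' htt'
  have hsurv : survZ g t n x → survZ g t' n x := fun h k hk hkn => by linarith [h k hk hkn]
  unfold killedRevSum
  simp only [Set.indicator, Set.mem_ofPred_eq]
  split_ifs with h h' h'
  · linarith
  · exact absurd (hsurv h) h'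
  · rcases n.eq_zero_or_pos with rfl | hn
    · exact absurd (fun k hk hk0 => absurd hk0 (by omega)) h
    · exact h' n hn le_rfl
  · rfl

lemma abs_killedRevSum_le {g : (ℤ → A) → ℝ} {B : ℝ} (hB : ∀ x, |g x| ≤ B) (t : ℝ) (n : ℕ)
    (x : ℤ → A) : |killedRevSum g t n x| ≤ |t| + n * B := by
  have hsum : |revSumZ g n x| ≤ n * B :=
    (Finset.abs_sum_le_sum_abs _ _).trans <| by
      simpa using Finset.sum_le_sum fun k (_ : k ∈ Finset.range n) => hB (shiftZinv^[k + 1] x)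
  calc |killedRevSum g t n x| ≤ |t + revSumZ g n x| := by
        simpa only [Real.norm_eq_abs, killedRevSum] using
          norm_indicator_le_norm_self (s := {x | survZ g t n x}) (fun x => t + revSumZ g n x) x
    _ ≤ |t| + n * B := (abs_add_le _ _).trans (by linarith)

variable [MeasurableSpace A]

lemma measurable_shiftZinv : Measurable (shiftZinv : (ℤ → A) → ℤ → A) :=
  measurable_pi_lambda _ fun n => measurable_pi_apply (n - 1)

lemma measurable_revSumZ {g : (ℤ → A) → ℝ} (hg : Measurable g) (n : ℕ) :
    Measurable (revSumZ g n) :=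
  Finset.measurable_sum _ fun k _ => hg.comp (measurable_shiftZinv.iterate (k + 1))

lemma measurable_killedRevSum {g : (ℤ → A) → ℝ} (hg : Measurable g) (t : ℝ) (n : ℕ) :
    Measurable (killedRevSum g t n) := by
  have hsurv : {x | survZ g t n x} = ⋂ k ∈ Finset.Icc 1 n, {x | 0 ≤ t + revSumZ g k x} := by
    ext x
    simp [survZ]
  refine (measurable_const.add (measurable_revSumZ hg n)).indicator ?_
  rw [hsurv]
  exact Finset.measurableSet_biInter _ fun k _ =>
    measurableSet_le measurable_const (measurable_const.add (measurable_revSumZ hg k))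

end KilledSums

section PastCylinders

variable (A) in
def pastCylinders : Set (Set (ℕ → A)) := {S | ∃ (k : ℕ) (b : Fin k → A), pastCyl b = S}

lemma isPiSystem_pastCylinders : IsPiSystem (pastCylinders A) := by
  have key : ∀ (k m : ℕ) (a : Fin k → A) (b : Fin m → A), k ≤ m →
      (pastCyl a ∩ pastCyl b).Nonempty → pastCyl a ∩ pastCyl b = pastCyl b := by
    rintro k m a b hkm ⟨y, hya, hyb⟩
    refine Set.inter_eq_self_of_subset_right fun w hw i => ?_
    rw [← hya i, hyb ⟨i, i.2.trans_le hkm⟩, ← hw ⟨i, i.2.trans_le hkm⟩]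
  rintro _ ⟨k, a, rfl⟩ _ ⟨m, b, rfl⟩ hne
  rcases le_total k m with h | h
  · exact ⟨m, b, (key k m a b h hne).symm⟩
  · rw [Set.inter_comm] at hne ⊢
    exact ⟨k, a, (key m k b a h hne).symm⟩

variable [MeasurableSpace A]

lemma measurable_consN (a : A) : Measurable (consN a) :=
  measurable_pi_lambda _ fun n => by
    rcases n with _ | n
    · exact measurable_const
    · exact measurable_pi_apply n

variable [MeasurableSingletonClass A]

lemma measurableSet_pastCyl_s18 {k : ℕ} (b : Fin k → A) : MeasurableSet (pastCyl b) := by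
  simp only [pastCyl, Set.ofPred_forall]
  exact .iInter fun i => (measurableSet_singleton (b i)).preimage (measurable_pi_apply (i : ℕ))

lemma generateFrom_pastCylinders [Finite A] :
    MeasurableSpace.generateFrom (pastCylinders A) = MeasurableSpace.pi := by
  refine le_antisymm (MeasurableSpace.generateFrom_le ?_) (iSup_le fun n => ?_)
  · rintro _ ⟨k, b, rfl⟩
    exact measurableSet_pastCyl_s18 b
  · rintro _ ⟨t, -, rfl⟩
    have hpre : (fun y : ℕ → A => y n) ⁻¹' t =
        ⋃ (b : Fin (n + 1) → A) (_ : b (Fin.last n) ∈ t), pastCyl b := by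
      ext y
      simp only [Set.mem_preimage, Set.mem_iUnion, pastCyl, Set.mem_ofPred_eq]
      refine ⟨fun hy => ⟨fun i => y i, hy, fun i => rfl⟩, ?_⟩
      rintro ⟨b, hb, hyb⟩
      rwa [← Fin.val_last n, hyb]
    rw [hpre]
    exact .iUnion fun b => .iUnion fun _ =>
      MeasurableSpace.measurableSet_generateFrom ⟨_, b, rfl⟩

lemma ext_of_pastCyl [Finite A] {μ ν : Measure (ℕ → A)} [IsFiniteMeasure μ]
    (h : ∀ (k : ℕ) (b : Fin (k + 1) → A), μ (pastCyl b) = ν (pastCyl b)) : μ = ν := by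
  have huniv : Set.univ = ⋃ a : A, pastCyl (fun _ : Fin 1 => a) := by
    ext y
    simp [pastCyl]
  have hdisj : Pairwise (Function.onFun Disjoint fun a : A => pastCyl (fun _ : Fin 1 => a)) :=
    fun a a' haa' => Set.disjoint_left.2 fun y hy hy' => haa' ((hy 0).symm.trans (hy' 0))
  have h_univ : μ Set.univ = ν Set.univ := by
    rw [huniv, measure_iUnion hdisj fun a => measurableSet_pastCyl_s18 _,
      measure_iUnion hdisj fun a => measurableSet_pastCyl_s18 _]
    exact tsum_congr fun a => h 0 _
  refine ext_of_generate_finite _ generateFrom_pastCylinders.symm isPiSystem_pastCylinders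
    ?_ h_univ
  rintro _ ⟨_ | k, b, rfl⟩
  · simpa [pastCyl] using h_univ
  · exact h k b

end PastCylinders

namespace IsCondGibbs

variable [MeasurableSpace A] {M : A → A → Bool} {ψ : (ℕ → A) → ℝ}
  {νm : (ℕ → A) → Measure (ℕ → A)} {z : ℕ → A}

lemma measure_univ (h : IsCondGibbs M ψ νm) (hz : z ∈ XplusSet M) : νm z Set.univ = 1 := by
  have h0 := (h z hz 0 Fin.elim0).1 ⟨fun h => absurd h (lt_irrefl 0), fun i hi => by omega⟩
  simpa [pastCyl, birkhoffN] using h0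

lemma isFiniteMeasure (h : IsCondGibbs M ψ νm) (hz : z ∈ XplusSet M) : IsFiniteMeasure (νm z) :=
  ⟨by simp [h.measure_univ hz]⟩

lemma measure_pastCyl_succ (h : IsCondGibbs M ψ νm) (hz : z ∈ XplusSet M) {k : ℕ}
    (b : Fin (k + 1) → A) (hb : M (b 0) (z 0) = true) :
    νm z (pastCyl b) = ENNReal.ofReal (Real.exp (-ψ (consN (b 0) z))) *
      νm (consN (b 0) z) (pastCyl (Fin.tail b)) := by
  have hbz := consN_mem_XplusSet hb hz
  by_cases hc : wordCompat M (Fin.tail b) (consN (b 0) z)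
  · rw [(h z hz _ b).1 ((wordCompat_succ_iff b z).2 ⟨hb, hc⟩), (h _ hbz k _).1 hc,
      ← ENNReal.ofReal_mul (Real.exp_pos _).le, ← Real.exp_add, birkhoffN_wordConcat_succ]
    ring_nf
  · rw [(h z hz _ b).2 (fun hbc => hc ((wordCompat_succ_iff b z).1 hbc).2), (h _ hbz k _).2 hc,
      mul_zero]

lemma measure_pastCyl_eq_zero (h : IsCondGibbs M ψ νm) (hz : z ∈ XplusSet M) {k : ℕ}
    (b : Fin (k + 1) → A) (hb : M (b 0) (z 0) ≠ true) : νm z (pastCyl b) = 0 :=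
  (h z hz _ b).2 fun hbc => hb ((wordCompat_succ_iff b z).1 hbc).1

lemma ae_pastCompat [Finite A] (h : IsCondGibbs M ψ νm) (hz : z ∈ XplusSet M) :
    ∀ᵐ y ∂νm z, pastCompat M y z := by
  have hsub : {y | ¬ pastCompat M y z} ⊆
      ⋃ (k : ℕ) (b : {b : Fin k → A // ¬ wordCompat M b z}), pastCyl b.1 := by
    intro y hy
    obtain ⟨k, hk⟩ : ∃ k, ¬ wordCompat M (fun i : Fin k => y i) z := by
      by_contra! hall
      exact hy (pastCompat_of_forall_wordCompat hall)
    exact Set.mem_iUnion₂.2 ⟨k, ⟨_, hk⟩, fun i => rfl⟩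
  exact measure_mono_null hsub
    (measure_iUnion_null fun k => measure_iUnion_null fun b => (h z hz k b.1).2 b.2)

variable [Fintype A] [MeasurableSingletonClass A]

lemma eq_sum_map_consN (h : IsCondGibbs M ψ νm) (hz : z ∈ XplusSet M) :
    νm z = ∑ a ∈ Finset.univ.filter (fun a => M a (z 0) = true),
      ENNReal.ofReal (Real.exp (-ψ (consN a z))) • (νm (consN a z)).map (consN a) := by
  have := h.isFiniteMeasure hz
  refine ext_of_pastCyl fun k b => ?_
  rw [Measure.coe_finsetSum, Finset.sum_apply]
  simp only [Measure.smul_apply, Measure.map_apply (measurable_consN _) (measurableSet_pastCyl_s18 b),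
    smul_eq_mul]
  by_cases hb : M (b 0) (z 0) = true
  · rw [h.measure_pastCyl_succ hz b hb, Finset.sum_eq_single (b 0), consN_preimage_pastCyl]
    · intro a _ ha
      rw [consN_preimage_pastCyl_of_ne ha, measure_empty, mul_zero]
    · simp [hb]
  · rw [h.measure_pastCyl_eq_zero hz b hb, Finset.sum_eq_zero]
    intro a ha
    have ha' : a ≠ b 0 := by rintro rfl; simp_all
    rw [consN_preimage_pastCyl_of_ne ha', measure_empty, mul_zero]

lemma integral_eq_sum (h : IsCondGibbs M ψ νm) (hz : z ∈ XplusSet M) {f : (ℕ → A) → ℝ}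
    (hf : Measurable f) (hfi : Integrable f (νm z)) :
    ∫ y, f y ∂νm z = ∑ a ∈ Finset.univ.filter (fun a => M a (z 0) = true),
      Real.exp (-ψ (consN a z)) * ∫ y, f (consN a y) ∂νm (consN a z) := by
  rw [h.eq_sum_map_consN hz] at hfi ⊢
  rw [integral_finsetSum_measure (integrable_finsetSum_measure.1 hfi)]
  refine Finset.sum_congr rfl fun a _ => ?_
  rw [integral_smul_measure, integral_map (measurable_consN a).aemeasurable
    hf.aestronglyMeasurable, ENNReal.toReal_ofReal (Real.exp_pos _).le, smul_eq_mul]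

end IsCondGibbs

section Holder

variable {S : Set (ℤ → A)} {C α : ℝ} {f : (ℤ → A) → ℝ}

lemma HolderWithZ.abs_le (hf : HolderWithZ S C α f) {x₀ : ℤ → A} (hx₀ : x₀ ∈ S) :
    ∀ x ∈ S, |f x| ≤ |f x₀| + C := fun x hx => by
  have h := hf x hx x₀ hx₀ 0 fun j hj => absurd hj (abs_nonneg j).not_gt
  rw [pow_zero, mul_one] at h
  linarith [abs_sub_abs_le_abs_sub (f x) (f x₀)]

variable [TopologicalSpace A] [DiscreteTopology A]

lemma HolderWithZ.continuousOn (hf : HolderWithZ S C α f) (hα0 : 0 ≤ α) (hα1 : α < 1) :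
    ContinuousOn f S := by
  intro x hx
  rw [ContinuousWithinAt, Metric.tendsto_nhds]
  intro ε hε
  obtain ⟨k, hk⟩ : ∃ k : ℕ, C * α ^ k < ε := by
    have hlim := (tendsto_pow_atTop_nhds_zero_of_lt_one hα0 hα1).const_mul C
    rw [mul_zero] at hlim
    exact (hlim.eventually (gt_mem_nhds hε)).exists
  have hnear : ∀ᶠ y in 𝓝 x, ∀ j ∈ Finset.Ioo (-(k : ℤ)) k, y j = x j :=
    (Finset.eventually_all _).2 fun j _ =>
      tendsto_pure.1 (by simpa [nhds_discrete] using (continuous_apply j).tendsto x)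
  filter_upwards [mem_nhdsWithin_of_mem_nhds hnear, self_mem_nhdsWithin] with y hy hyS
  rw [Real.dist_eq]
  exact (hf y hyS x hx k fun j hj => hy j (Finset.mem_Ioo.2 (abs_lt.1 hj))).trans_lt hk

lemma isClosed_XSet (M : A → A → Bool) : IsClosed (XSet M) := by
  simp only [XSet, Set.ofPred_forall]
  refine isClosed_iInter fun n => ?_
  have hpair : Continuous fun x : ℤ → A => (x n, x (n + 1)) :=
    (continuous_apply n).prodMk (continuous_apply (n + 1))
  exact (isClosed_discrete {p : A × A | M p.1 p.2 = true}).preimage hpair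

lemma IsHolderZ.exists_measurable_eqOn [Finite A] [MeasurableSpace A] [MeasurableSingletonClass A]
    {M : A → A → Bool} {g : (ℤ → A) → ℝ} (hg : IsHolderZ (XSet M) g) :
    ∃ (G : (ℤ → A) → ℝ) (B : ℝ), Measurable G ∧ (∀ x, |G x| ≤ B) ∧ Set.EqOn G g (XSet M) := by
  classical
  obtain ⟨C, α, hC, hα0, hα1, hH⟩ := hg
  have : OpensMeasurableSpace A :=
    ⟨MeasurableSpace.generateFrom_le fun s _ => s.toFinite.measurableSet⟩
  have hG : Measurable ((XSet M).piecewise g 0) :=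
    (hH.continuousOn hα0.le hα1).measurable_piecewise continuousOn_const
      (isClosed_XSet M).measurableSet
  rcases (XSet M).eq_empty_or_nonempty with hX | ⟨x₀, hx₀⟩
  · exact ⟨_, 0, hG, fun x => by simp [hX], fun x hx => by simp [hX] at hx⟩
  refine ⟨_, |g x₀| + C, hG, fun x => ?_, fun x hx => Set.piecewise_eq_of_mem _ _ _ hx⟩
  by_cases hx : x ∈ XSet M
  · rw [Set.piecewise_eq_of_mem _ _ _ hx]
    exact hH.abs_le hx₀ x hx
  · rw [Set.piecewise_eq_of_notMem _ _ _ hx, Pi.zero_apply, abs_zero]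
    positivity

end Holder

section TestFunctions

lemma Filter.EventuallyEq.eq_of_continuousWithinAt_Ici {α β : Type*} [LinearOrder α]
    [TopologicalSpace α] [OrderTopology α] [NoMaxOrder α] [DenselyOrdered α] [MeasurableSpace α]
    {μ : Measure α} [μ.IsOpenPosMeasure] [TopologicalSpace β] [T2Space β] {f g : α → β}
    (hfg : f =ᵐ[μ] g) {t : α} (hf : ContinuousWithinAt f (Set.Ici t) t)
    (hg : ContinuousWithinAt g (Set.Ici t) t) : f t = g t := by
  have hfreq : ∃ᶠ s in 𝓝[>] t, f s = g s := fun hne => by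
    obtain ⟨u, htu, hsub⟩ := mem_nhdsGT_iff_exists_Ioo_subset.1 hne
    exact (isOpen_Ioo.measure_pos μ (Set.nonempty_Ioo.2 htu)).ne'
      (measure_mono_null hsub (ae_iff.1 hfg))
  exact tendsto_nhds_unique_of_frequently_eq (hf.mono Set.Ioi_subset_Ici_self)
    (hg.mono Set.Ioi_subset_Ici_self) hfreq

lemma eq_of_integral_mul_eq {f g : ℝ → ℝ} (hf : LocallyIntegrable f) (hg : LocallyIntegrable g)
    (h : ∀ φ : ℝ → ℝ, Continuous φ → HasCompactSupport φ → ∫ t, φ t * f t = ∫ t, φ t * g t)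
    {t : ℝ} (hft : ContinuousWithinAt f (Set.Ici t) t) (hgt : ContinuousWithinAt g (Set.Ici t) t) :
    f t = g t :=
  Filter.EventuallyEq.eq_of_continuousWithinAt_Ici
    (ae_eq_of_integral_contDiff_smul_eq hf hg fun φ hφ hφc => h φ hφ.continuous hφc) hft hgt

lemma integral_mul_finset_sum {ι : Type*} (s : Finset ι) (c : ι → ℝ) {f : ι → ℝ → ℝ}
    (hf : ∀ i ∈ s, LocallyIntegrable (f i)) {φ : ℝ → ℝ} (hφ : Continuous φ)
    (hφc : HasCompactSupport φ) :
    ∫ t, φ t * ∑ i ∈ s, c i * f i t = ∑ i ∈ s, c i * ∫ t, φ t * f i t := by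
  simp_rw [Finset.mul_sum, mul_left_comm (φ _)]
  rw [integral_finsetSum s (f := fun i t => c i * (φ t * f i t)) fun i hi =>
    ((hf i hi).integrable_smul_left_of_hasCompactSupport hφ hφc).const_mul (c i)]
  simp_rw [integral_const_mul]

end TestFunctions

section HarmonicApprox

variable [MeasurableSpace A] {M : A → A → Bool} {ψ : (ℕ → A) → ℝ}
  {νm : (ℕ → A) → Measure (ℕ → A)} {g G : (ℤ → A) → ℝ} {z : ℕ → A}

/-- `∫ (t + Š_n g(y·z)) 1{τ̌_t^g(y·z) > n} ν⁻_z(dy)`. -/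
noncomputable def harmonicApprox (νm : (ℕ → A) → Measure (ℕ → A)) (g : (ℤ → A) → ℝ)
    (z : ℕ → A) (n : ℕ) (t : ℝ) : ℝ :=
  ∫ y, killedRevSum g t n (concat y z) ∂νm z

lemma IsHarmonicLimit.tendsto {W : (ℕ → A) → ℝ → ℝ} (hW : IsHarmonicLimit M νm g W)
    (hz : z ∈ XplusSet M) {φ : ℝ → ℝ} (hφ : Continuous φ) (hφc : HasCompactSupport φ) :
    Tendsto (fun n => ∫ t, φ t * harmonicApprox νm g z n t) atTop (𝓝 (∫ t, φ t * W z t)) :=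
  (hW z hz).2 φ hφ hφc

lemma measurable_concat (z : ℕ → A) : Measurable fun y : ℕ → A => concat y z :=
  measurable_pi_lambda _ fun n => by
    by_cases h : 0 ≤ n
    · simp [concat, h]
    · simpa [concat, h] using measurable_pi_apply _

lemma harmonicApprox_congr [Finite A] (h : IsCondGibbs M ψ νm) (hz : z ∈ XplusSet M)
    (hGg : Set.EqOn G g (XSet M)) (n : ℕ) (t : ℝ) :
    harmonicApprox νm G z n t = harmonicApprox νm g z n t :=
  integral_congr_ae <| (h.ae_pastCompat hz).mono fun _ hy =>
    killedRevSum_congr hGg (concat_mem_XSet hy hz) t n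

lemma isHarmonicLimit_congr [Finite A] (h : IsCondGibbs M ψ νm) (hGg : Set.EqOn G g (XSet M))
    {W : (ℕ → A) → ℝ → ℝ} : IsHarmonicLimit M νm G W ↔ IsHarmonicLimit M νm g W := by
  refine forall₂_congr fun z hz => and_congr_right fun _ => forall₃_congr fun φ _ _ => ?_
  change Tendsto (fun n => ∫ t, φ t * harmonicApprox νm G z n t) _ _ ↔
    Tendsto (fun n => ∫ t, φ t * harmonicApprox νm g z n t) _ _
  simp only [harmonicApprox_congr h hz hGg]

variable {B : ℝ}

lemma integrable_killedRevSum_concat (h : IsCondGibbs M ψ νm) (hz : z ∈ XplusSet M)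
    (hG : Measurable G) (hB : ∀ x, |G x| ≤ B) (t : ℝ) (n : ℕ) :
    Integrable (fun y => killedRevSum G t n (concat y z)) (νm z) := by
  have := h.isFiniteMeasure hz
  exact .of_bound ((measurable_killedRevSum hG t n).comp (measurable_concat z)).aestronglyMeasurable
    (|t| + n * B) (.of_forall fun _ => abs_killedRevSum_le hB t n _)

lemma harmonicApprox_mono (h : IsCondGibbs M ψ νm) (hz : z ∈ XplusSet M) (hG : Measurable G)
    (hB : ∀ x, |G x| ≤ B) (n : ℕ) : Monotone (harmonicApprox νm G z n) := fun t t' htt' =>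
  integral_mono (integrable_killedRevSum_concat h hz hG hB t n)
    (integrable_killedRevSum_concat h hz hG hB t' n) fun _ => killedRevSum_mono G n _ htt'

variable [MeasurableSingletonClass A]

lemma harmonicApprox_comp_shiftZinv [Fintype A] (h : IsCondGibbs M ψ νm) (hz : z ∈ XplusSet M)
    (hG : Measurable G) (hB : ∀ x, |G x| ≤ B) (n : ℕ) (t : ℝ) :
    harmonicApprox νm (fun x => G (shiftZinv x)) z n t =
      ∑ a ∈ Finset.univ.filter (fun a => M a (z 0) = true),
        Real.exp (-ψ (consN a z)) * harmonicApprox νm G (consN a z) n t := by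
  have hint : Integrable (fun y => killedRevSum (fun x => G (shiftZinv x)) t n (concat y z))
      (νm z) :=
    integrable_killedRevSum_concat h hz (hG.comp measurable_shiftZinv) (fun x => hB _) t n
  simp only [harmonicApprox, killedRevSum_comp_shiftZinv] at hint ⊢
  rw [h.integral_eq_sum hz (f := fun y => killedRevSum G t n (shiftZinv (concat y z)))
    ((measurable_killedRevSum hG t n).comp (measurable_shiftZinv.comp (measurable_concat z))) hint]
  simp only [shiftZinv_concat_consN]

end HarmonicApprox

theorem IsHarmonicLimit.apply_eq_sum_of_comp_shiftZinv [Fintype A] [MeasurableSpace A]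
    [MeasurableSingletonClass A] {M : A → A → Bool} {ψ : (ℕ → A) → ℝ}
    {νm : (ℕ → A) → Measure (ℕ → A)} (h : IsCondGibbs M ψ νm) {G : (ℤ → A) → ℝ} {B : ℝ}
    (hG : Measurable G) (hB : ∀ x, |G x| ≤ B) {V V' : (ℕ → A) → ℝ → ℝ}
    (hV : IsHarmonicLimit M νm G V) (hV' : IsHarmonicLimit M νm (fun x => G (shiftZinv x)) V')
    {z : ℕ → A} (hz : z ∈ XplusSet M) (t : ℝ) :
    V' z t = ∑ a ∈ Finset.univ.filter (fun a => M a (z 0) = true),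
      Real.exp (-ψ (consN a z)) * V (consN a z) t := by
  set F := Finset.univ.filter fun a => M a (z 0) = true
  have hzF : ∀ a ∈ F, consN a z ∈ XplusSet M := fun a ha =>
    consN_mem_XplusSet (Finset.mem_filter.1 ha).2 hz
  have hmono : Monotone fun s => ∑ a ∈ F, Real.exp (-ψ (consN a z)) * V (consN a z) s :=
    fun s s' hss' => Finset.sum_le_sum fun a ha =>
      mul_le_mul_of_nonneg_left ((hV _ (hzF a ha)).1.1 hss') (Real.exp_pos _).le
  refine eq_of_integral_mul_eq (hV' z hz).1.1.locallyIntegrable hmono.locallyIntegrable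
    (fun φ hφ hφc => ?_) ((hV' z hz).1.2 t)
    (tendsto_finsetSum _ fun a ha => ((hV _ (hzF a ha)).1.2 t).const_mul _)
  have happrox : ∀ n, ∫ s, φ s * harmonicApprox νm (fun x => G (shiftZinv x)) z n s =
      ∑ a ∈ F, Real.exp (-ψ (consN a z)) * ∫ s, φ s * harmonicApprox νm G (consN a z) n s :=
    fun n => by
      simp only [harmonicApprox_comp_shiftZinv h hz hG hB]
      exact integral_mul_finset_sum F _
        (fun a ha => (harmonicApprox_mono h (hzF a ha) hG hB n).locallyIntegrable) hφ hφc
  rw [integral_mul_finset_sum F _ (fun a ha => (hV _ (hzF a ha)).1.1.locallyIntegrable) hφ hφc]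
  refine tendsto_nhds_unique (hV'.tendsto hz hφ hφc) ?_
  simp only [happrox]
  exact tendsto_finsetSum _ fun a ha => (hV.tendsto (hzF a ha) hφ hφc).const_mul _

theorem statement18_general [Fintype A] [MeasurableSpace A] [MeasurableSingletonClass A]
    [TopologicalSpace A] [DiscreteTopology A]
    (M : A → A → Bool) (ψ : (ℕ → A) → ℝ)
    (νm : (ℕ → A) → Measure (ℕ → A)) (hνm : IsCondGibbs M ψ νm)
    (g : (ℤ → A) → ℝ) (hg : IsHolderZ (XSet M) g)
    (V V' : (ℕ → A) → ℝ → ℝ)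
    (hV : IsHarmonicLimit M νm g V)
    (hV' : IsHarmonicLimit M νm (fun x => g (shiftZinv x)) V') :
    ∀ z ∈ XplusSet M, ∀ t : ℝ,
      V' z t = ∑ a ∈ Finset.univ.filter (fun a => M a (z 0) = true),
        Real.exp (-ψ (consN a z)) * V (consN a z) t := by
  obtain ⟨G, B, hG, hB, hGg⟩ := hg.exists_measurable_eqOn
  have hGg' : Set.EqOn (fun x => G (shiftZinv x)) (fun x => g (shiftZinv x)) (XSet M) :=
    fun x hx => hGg (mapsTo_shiftZinv_XSet M hx)
  intro z hz t
  exact IsHarmonicLimit.apply_eq_sum_of_comp_shiftZinv hνm hG hB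
    ((isHarmonicLimit_congr hνm hGg).2 hV) ((isHarmonicLimit_congr hνm hGg').2 hV') hz t

/-- Compatibility of the harmonic function with shifting the observable by `T⁻¹`:
`V̌^{g∘T⁻¹}(z,t) = L_ψ(V̌^g(·,t))(z)`. -/
theorem statement18 [Fintype A] [DecidableEq A] [MeasurableSpace A] [MeasurableSingletonClass A]
    [TopologicalSpace A] [DiscreteTopology A]
    (M : A → A → Bool) (ψ : (ℕ → A) → ℝ) (hψ : ∃ C αh : ℝ, 0 < C ∧ 0 < αh ∧ αh < 1 ∧
      HolderWithN (XplusSet M) C αh ψ)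
    (hnorm : ∀ z ∈ XplusSet M, transfer M ψ (fun _ => (1 : ℝ)) z = 1)
    (νm : (ℕ → A) → Measure (ℕ → A)) (hνm : IsCondGibbs M ψ νm)
    (ν : Measure (ℤ → A)) [IsProbabilityMeasure ν]
    (hinv : MeasurePreserving shiftZ ν ν) (hsupp : ν (XSet M) = 1)
    (g : (ℤ → A) → ℝ) (hg : IsHolderZ (XSet M) g) (hg0 : ∫ x, g x ∂ν = 0)
    (hcob : ¬ IsCoboundaryZ (XSet M) g)
    (V V' : (ℕ → A) → ℝ → ℝ)
    (hV : IsHarmonicLimit M νm g V)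
    (hV' : IsHarmonicLimit M νm (fun x => g (shiftZinv x)) V') :
    ∀ z ∈ XplusSet M, ∀ t : ℝ,
      V' z t = ∑ a ∈ Finset.univ.filter (fun a => M a (z 0) = true),
        Real.exp (-ψ (consN a z)) * V (consN a z) t :=
  statement18_general M ψ νm hνm g hg V V' hV hV'
end
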